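/- For all real numbers a and b with a ≠ 0, the sequence (a · n^b)_{n≥1} = (a, a·2^b, a·3^b, ...) is not a Benford sequence. -/

import Mathlib

open MeasureTheory Filter

/-- The decimal significand of a real number: for `x ≠ 0`, the unique `t ∈ [1,10)`
with `|x| = 10 ^ k * t` for some integer `k`; and `S 0 = 0`. -/
noncomputable def S (x : ℝ) : ℝ :=
  if x = 0 then 0 else (10 : ℝ) ^ (Int.fract (Real.logb 10 |x|))

/-- The `m`-th significant decimal digit: `D 1 x = ⌊S x⌋` and for `m ≥ 2`,
`D m x = ⌊10 ^ (m-1) * S x⌋ mod 10` (the uniform formula also gives `D 1`). -/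
noncomputable def D (m : ℕ) (x : ℝ) : ℤ :=
  ⌊(10 : ℝ) ^ (m - 1) * S x⌋ % 10

/-- The number of indices `n` with `1 ≤ n ≤ N` satisfying the property `p`. -/
noncomputable def countIn (N : ℕ) (p : ℕ → Prop) : ℕ :=
  Nat.card {n : ℕ | 1 ≤ n ∧ n ≤ N ∧ p n}

/-- A sequence `(x n)` (indexed by `n ≥ 1`) is Benford if for every `t ∈ [1,10)` the
limiting proportion of indices with `S (x n) ≤ t` equals `log₁₀ t`. -/
def BenfordSeq (x : ℕ → ℝ) : Prop :=
  ∀ t : ℝ, 1 ≤ t → t < 10 →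
    Tendsto (fun N : ℕ => (countIn N (fun n => S (x n) ≤ t) : ℝ) / N)
      atTop (nhds (Real.logb 10 t))

/-- A sequence `(y n)` (indexed by `n ≥ 1`) is uniformly distributed modulo one. -/
def UnifModOne (y : ℕ → ℝ) : Prop :=
  ∀ s : ℝ, 0 ≤ s → s ≤ 1 →
    Tendsto (fun N : ℕ => (countIn N (fun n => Int.fract (y n) ≤ s) : ℝ) / N)
      atTop (nhds s)

/-- A random variable `X` on `(Ω, μ)` is Benford if `P(S(X) ≤ t) = log₁₀ t`
for all `t ∈ [1,10)`. -/
def BenfordRV {Ω : Type*} [MeasurableSpace Ω] (μ : Measure Ω) (X : Ω → ℝ) : Prop :=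
  ∀ t : ℝ, 1 ≤ t → t < 10 →
    μ {ω | S (X ω) ≤ t} = ENNReal.ofReal (Real.logb 10 t)

/-- Two real-valued random variables are identically distributed (equal CDFs). -/
def SameDist {Ω : Type*} [MeasurableSpace Ω] (μ : Measure Ω) (U V : Ω → ℝ) : Prop :=
  ∀ t : ℝ, μ {ω | U ω ≤ t} = μ {ω | V ω ≤ t}

/-- `X` has scale-invariant significant digits: `S (a • X)` and `S X` are identically
distributed for every `a > 0`. -/
def ScaleInvSig {Ω : Type*} [MeasurableSpace Ω] (μ : Measure Ω) (X : Ω → ℝ) : Prop :=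
  ∀ a : ℝ, 0 < a → SameDist μ (fun ω => S (a * X ω)) (fun ω => S (X ω))

/-- `X` has base-invariant significant digits: `S (X ^ n)` and `S X` are identically
distributed for every positive integer `n`. -/
def BaseInvSig {Ω : Type*} [MeasurableSpace Ω] (μ : Measure Ω) (X : Ω → ℝ) : Prop :=
  ∀ n : ℕ, 1 ≤ n → SameDist μ (fun ω => S (X ω ^ n)) (fun ω => S (X ω))

/-- A real number `a` is a rational power of `10` if `a = 10 ^ (m/k)` for some
integers `m, k` with `k ≠ 0`. -/
def IsRatPowTen (a : ℝ) : Prop :=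
  ∃ m k : ℤ, k ≠ 0 ∧ a = (10 : ℝ) ^ ((m : ℝ) / (k : ℝ))

/-! `S(a n^b) ≤ 2` means `{log₁₀ |a| + b log₁₀ n} ≤ log₁₀ 2`. For `b ≠ 0` this affine function of
`log₁₀ n` has fractional part above `log₁₀ 2` on infinitely many windows of fixed length, i.e. there
are arbitrarily large `L` such that no `n ∈ (L, λL]` satisfies `S(a n^b) ≤ 2`, for a fixed `λ > 1`.
Across such a gap the count does not grow, so the proportions near `L` and near `λL` differ by the
factor `λ`, which is incompatible with a positive limit. For `b = 0` the sequence is constant and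
the proportions tend to `0` or `1`, never to `log₁₀ 2`. -/

open Real

section Counting

variable {p : ℕ → Prop}

lemma countIn_eq_of_gap {N M : ℕ} (hNM : N ≤ M) (hgap : ∀ n, N < n → n ≤ M → ¬ p n) :
    countIn M p = countIn N p := by
  unfold countIn
  congr 2
  ext n
  refine ⟨fun ⟨h1, h2, h3⟩ => ⟨h1, ?_, h3⟩, fun ⟨h1, h2, h3⟩ => ⟨h1, h2.trans hNM, h3⟩⟩
  by_contra hn
  exact hgap n (not_le.1 hn) h2 h3

lemma countIn_const (N : ℕ) (P : Prop) [Decidable P] :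
    countIn N (fun _ => P) = if P then N else 0 := by
  split_ifs with hP
  · have : {n : ℕ | 1 ≤ n ∧ n ≤ N ∧ P} = ↑(Finset.Icc 1 N) := by ext; simp [hP]
    simp [countIn, this]
  · simp [countIn, hP]

lemma tendsto_countIn_const_div (P : Prop) [Decidable P] :
    Tendsto (fun N : ℕ => (countIn N (fun _ => P) : ℝ) / N) atTop (nhds (if P then 1 else 0)) := by
  simp_rw [countIn_const]
  split_ifs
  · refine tendsto_const_nhds.congr' ?_
    filter_upwards [eventually_ge_atTop 1] with N hN
    rw [div_self (by positivity)]
  · simp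

lemma tendsto_countIn_natFloor_div {δ : ℝ}
    (h : Tendsto (fun N : ℕ => (countIn N p : ℝ) / N) atTop (nhds δ)) :
    Tendsto (fun x : ℝ => (countIn ⌊x⌋₊ p : ℝ) / x) atTop (nhds δ) := by
  have := (h.comp tendsto_nat_floor_atTop).mul (tendsto_nat_floor_div_atTop (R := ℝ))
  rw [mul_one] at this
  refine this.congr' ?_
  filter_upwards [eventually_ge_atTop 1] with x hx
  have : (⌊x⌋₊ : ℝ) ≠ 0 := Nat.cast_ne_zero.2 (Nat.floor_pos.2 hx).ne'
  simp only [Function.comp_apply]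
  field_simp

theorem not_tendsto_countIn_div_of_frequently_gap {δ lam : ℝ} (hδ : 0 < δ) (hlam : 1 < lam)
    (hgap : ∃ᶠ L : ℝ in atTop, ∀ n : ℕ, L < n → n ≤ lam * L → ¬ p n) :
    ¬ Tendsto (fun N : ℕ => (countIn N p : ℝ) / N) atTop (nhds δ) := by
  intro h
  have hF := tendsto_countIn_natFloor_div h
  set l := atTop ⊓ 𝓟 {L : ℝ | ∀ n : ℕ, L < n → n ≤ lam * L → ¬ p n}
  have : l.NeBot := frequently_iff_neBot.1 hgap
  have hscaled : Tendsto (fun L => (countIn ⌊lam * L⌋₊ p : ℝ) / (lam * L)) l (nhds δ) :=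
    hF.comp ((tendsto_id.const_mul_atTop (by linarith)).mono_left inf_le_left)
  have hshrunk : Tendsto (fun L => (countIn ⌊lam * L⌋₊ p : ℝ) / (lam * L)) l (nhds (δ / lam)) := by
    refine ((hF.mono_left inf_le_left).div_const lam).congr' ?_
    filter_upwards [inf_le_left (a := atTop) (eventually_ge_atTop (0 : ℝ)),
      inf_le_right (b := 𝓟 _) (mem_principal_self _)] with L hL hL_gap
    have hfloor : ⌊L⌋₊ ≤ ⌊lam * L⌋₊ := Nat.floor_le_floor (by nlinarith)
    rw [countIn_eq_of_gap hfloor fun n hn hn' => hL_gap n ((Nat.floor_lt hL).1 hn)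
      ((Nat.le_floor_iff (by positivity)).1 hn'), div_div, mul_comm]
  have := tendsto_nhds_unique hscaled hshrunk
  linarith [div_lt_self hδ hlam]

end Counting

lemma lt_fract_of_abs_sub_lt {s y : ℝ} (k : ℤ) (hs : 0 ≤ s)
    (h : |y - (k + (1 + s) / 2)| < (1 - s) / 2) : s < Int.fract y := by
  obtain ⟨hlo, hhi⟩ := abs_lt.1 h
  have hfloor : ⌊y⌋ = k := Int.floor_eq_iff.2 ⟨by linarith, by linarith⟩
  rw [Int.fract, hfloor]
  linarith

lemma exists_int_le_sub_div (c R : ℝ) {b : ℝ} (hb : b ≠ 0) : ∃ k : ℤ, R ≤ (k - c) / b := by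
  rcases hb.lt_or_gt with hb | hb
  · exact ⟨⌊c + b * R⌋, (le_div_iff_of_neg hb).2 (by linarith [Int.floor_le (c + b * R)])⟩
  · exact ⟨⌈c + b * R⌉, (le_div_iff₀ hb).2 (by linarith [Int.le_ceil (c + b * R)])⟩

/-- The centres `m` are the solutions of `c + b m ≡ (1 + s) / 2 (mod 1)`. -/
lemma frequently_lt_fract_add_mul (c : ℝ) {b s : ℝ} (hb : b ≠ 0) (hs : 0 ≤ s) :
    ∃ᶠ m in atTop, ∀ u, |u - m| < (1 - s) / (2 * |b|) → s < Int.fract (c + b * u) := by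
  rw [frequently_atTop]
  intro R
  obtain ⟨k, hk⟩ := exists_int_le_sub_div (c - (1 + s) / 2) R hb
  refine ⟨_, hk, fun u hu => lt_fract_of_abs_sub_lt k hs ?_⟩
  have hb' : 0 < |b| := abs_pos.2 hb
  calc |c + b * u - (k + (1 + s) / 2)| = |b| * |u - (k - (c - (1 + s) / 2)) / b| := by
        rw [← abs_mul]; congr 1; field_simp; ring
    _ < |b| * ((1 - s) / (2 * |b|)) := by gcongr
    _ = (1 - s) / 2 := by field_simp

lemma S_le_iff_fract_logb_le {x t : ℝ} (hx : x ≠ 0) (ht : 0 < t) :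
    S x ≤ t ↔ Int.fract (logb 10 |x|) ≤ logb 10 t := by
  rw [S, if_neg hx, le_logb_iff_rpow_le (by norm_num) ht]

lemma logb_abs_mul_rpow {a : ℝ} (ha : a ≠ 0) (b : ℝ) {x : ℝ} (hx : 0 < x) :
    logb 10 |a * x ^ b| = logb 10 |a| + b * logb 10 x := by
  rw [abs_mul, abs_of_pos (rpow_pos_of_pos hx b),
    logb_mul (abs_ne_zero.2 ha) (rpow_pos_of_pos hx b).ne', logb_rpow_eq_mul_logb_of_pos hx]

lemma frequently_gap_S_mul_rpow {a b t : ℝ} (ha : a ≠ 0) (hb : b ≠ 0) (ht : 1 ≤ t) :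
    ∃ᶠ L : ℝ in atTop, ∀ n : ℕ, L < n → n ≤ (10 : ℝ) ^ ((1 - logb 10 t) / (2 * |b|)) * L →
      ¬ S (a * (n : ℝ) ^ b) ≤ t := by
  set w := (1 - logb 10 t) / (2 * |b|)
  have hshift : Tendsto (fun m : ℝ => (10 : ℝ) ^ (m - w)) atTop atTop :=
    (tendsto_rpow_atTop_of_base_gt_one 10 (by norm_num)).comp
      (tendsto_atTop_add_const_right _ _ tendsto_id)
  refine hshift.frequently_map _ (fun m hm n hLn hnL => ?_)
    (frequently_lt_fract_add_mul (logb 10 |a|) hb (logb_nonneg (b := 10) (by norm_num) ht))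
  rw [← rpow_add (by norm_num), add_sub_cancel] at hnL
  have hn : (0 : ℝ) < n := (rpow_pos_of_pos (by norm_num) _).trans hLn
  rw [S_le_iff_fract_logb_le (mul_ne_zero ha (rpow_pos_of_pos hn b).ne') (by linarith), not_le,
    logb_abs_mul_rpow ha b hn]
  have hlo := (lt_logb_iff_rpow_lt (by norm_num) hn).2 hLn
  have hhi := (logb_le_iff_le_rpow (by norm_num) hn).2 hnL
  exact hm _ (abs_lt.2 ⟨by linarith, by linarith⟩)

/-- No sequence `(a * n ^ b)` is Benford. -/
theorem not_benfordSeq_rpow (a b : ℝ) (ha : a ≠ 0) :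
    ¬ BenfordSeq (fun n => a * (n : ℝ) ^ b) := by
  intro hB
  have hpos : 0 < logb 10 2 := logb_pos (by norm_num) (by norm_num)
  have hlt : logb 10 2 < 1 := by
    rw [logb_lt_iff_lt_rpow (by norm_num) (by norm_num)]; norm_num
  have h2 := hB 2 (by norm_num) (by norm_num)
  rcases eq_or_ne b 0 with rfl | hb
  · simp only [rpow_zero, mul_one] at h2
    have := tendsto_nhds_unique h2 (tendsto_countIn_const_div (S a ≤ 2))
    split_ifs at this <;> linarith
  · exact not_tendsto_countIn_div_of_frequently_gap hpos
      (one_lt_rpow (by norm_num) (div_pos (by linarith) (by positivity)))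
      (frequently_gap_S_mul_rpow ha hb (by norm_num)) h2
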